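/- If an infinite word u satisfies property R_3, then u has no weak bispecial factor. -/

import Mathlib

/-!
Under `R_3` the word `u` is recurrent, and the occurrences of a factor `w` cut `u` into its three
return words, coded by a derived sequence `e` over `Fin 3` in which every letter recurs. The return
word with code `m` determines the letter `a m` just before the next occurrence of `w` and the
letter `b m` just after `w`, and the factors `c w d` of `u` are exactly the pairs
`(a (e n), b (e (n + 1)))`.

If `B(w) < 0`, the bipartite graph on left and right extensions with these pairs as edges has at
least two more vertices than edges, so it is disconnected. Colouring each code by the component
side of `a m` and of `b m` restricts which code may follow which, and a finite case analysis of
the admissible transition patterns exhibits a factor `w d` or `c w` whose return words all come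
from at most two blocks of `e`. That factor has at most two return words, contradicting `R_3`.
-/

variable {A : Type*}

/-- The factor of `u` of length `n` starting at position `j`. -/
def factorAt (u : ℕ → A) (j n : ℕ) : List A :=
  (List.range n).map (fun i => u (j + i))

/-- `j` is an occurrence of the finite word `w` in `u`. -/
def OccursAt (u : ℕ → A) (w : List A) (j : ℕ) : Prop :=
  factorAt u j w.length = w

/-- `w` is a factor of the infinite word `u`. -/
def IsFactor (u : ℕ → A) (w : List A) : Prop :=
  ∃ j, OccursAt u w j

/-- `v` is a return word of `w` in `u`: the word between two successive occurrences of `w`. -/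
def IsReturnWord (u : ℕ → A) (w v : List A) : Prop :=
  ∃ j k, j < k ∧ OccursAt u w j ∧ OccursAt u w k ∧
    (∀ l, j < l → l < k → ¬ OccursAt u w l) ∧ v = factorAt u j (k - j)

/-- The set `R(w)` of return words of `w` in `u`. -/
def returnWords (u : ℕ → A) (w : List A) : Set (List A) :=
  {v | IsReturnWord u w v}

/-- Property `R_m`: every factor of `u` has exactly `m` return words. -/
def PropertyR (u : ℕ → A) (m : ℕ) : Prop :=
  ∀ w, IsFactor u w → (returnWords u w).Finite ∧ (returnWords u w).ncard = m

/-- The set of left extensions of `w`. -/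
def leftExt (u : ℕ → A) (w : List A) : Set A := {a | IsFactor u (a :: w)}

/-- The set of right extensions of `w`. -/
def rightExt (u : ℕ → A) (w : List A) : Set A := {b | IsFactor u (w ++ [b])}

def LeftSpecial (u : ℕ → A) (w : List A) : Prop := 2 ≤ (leftExt u w).ncard

def RightSpecial (u : ℕ → A) (w : List A) : Prop := 2 ≤ (rightExt u w).ncard

/-- The set of pairs `(a, b)` such that `a w b` is a factor of `u`. -/
def extPairs (u : ℕ → A) (w : List A) : Set (A × A) :=
  {p | IsFactor u (p.1 :: (w ++ [p.2]))}

/-- The bilateral order `B(w)`. -/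
noncomputable def bilateralOrder (u : ℕ → A) (w : List A) : ℤ :=
  ((extPairs u w).ncard : ℤ) - (leftExt u w).ncard - (rightExt u w).ncard + 1

/-- `w` is a weak bispecial factor of `u`. -/
def WeakBispecial (u : ℕ → A) (w : List A) : Prop :=
  IsFactor u w ∧ bilateralOrder u w < 0

/-- The factor complexity of `u`. -/
noncomputable def Complexity (u : ℕ → A) (n : ℕ) : ℕ :=
  {w : List A | w.length = n ∧ IsFactor u w}.ncard

/-- `u` is recurrent: every factor occurs at least twice. -/
def Recurrent (u : ℕ → A) : Prop :=
  ∀ w, IsFactor u w → ∃ j k, j < k ∧ OccursAt u w j ∧ OccursAt u w k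

/-- `u` is uniformly recurrent. -/
def UniformlyRecurrent (u : ℕ → A) : Prop :=
  ∀ n : ℕ, ∃ N : ℕ, ∀ w, IsFactor u w → w.length = N →
    ∀ v, IsFactor u v → v.length = n → v <:+: w

def EventuallyPeriodic (u : ℕ → A) : Prop :=
  ∃ p, 0 < p ∧ ∃ N, ∀ n, N ≤ n → u (n + p) = u n

/-- `w` is a maximal right special factor. -/
def MaximalRightSpecial (u : ℕ → A) (w : List A) : Prop :=
  IsFactor u w ∧ RightSpecial u w ∧
    ∀ v, IsFactor u v → RightSpecial u v → w <:+ v → v = w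

/-- The return word `v` of `w` starts with the letter `b`. -/
def StartsWithLetter (w v : List A) (b : A) : Prop := (w ++ [b]) <+: (v ++ w)

section Words

variable {u : ℕ → A} {v w : List A} {c : A} {i j k l n : ℕ}

@[simp]
lemma length_factorAt (u : ℕ → A) (j n : ℕ) : (factorAt u j n).length = n := by
  simp [factorAt]

@[simp]
lemma getElem_factorAt (u : ℕ → A) (j n i : ℕ) (hi : i < (factorAt u j n).length) :
    (factorAt u j n)[i] = u (j + i) := by
  simp [factorAt]

lemma factorAt_add (u : ℕ → A) (j m n : ℕ) :
    factorAt u j (m + n) = factorAt u j m ++ factorAt u (j + m) n := by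
  simp only [factorAt, List.range_add, List.map_append, List.map_map]
  congr 1
  exact List.map_congr_left fun i _ => by simp [Nat.add_assoc]

lemma factorAt_one (u : ℕ → A) (j : ℕ) : factorAt u j 1 = [u j] := rfl

lemma factorAt_eq_cons_dropLast (u : ℕ → A) (j : ℕ) (hn : 0 < n) :
    factorAt u j n = u j :: (factorAt u (j + 1) n).dropLast := by
  obtain ⟨m, rfl⟩ := Nat.exists_eq_add_of_lt hn
  rw [zero_add, factorAt_add u (j + 1), factorAt_one, List.dropLast_concat, add_comm,
    factorAt_add, factorAt_one, List.singleton_append]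

lemma OccursAt.getElem_eq (h : OccursAt u w j) (i : ℕ) (hi : i < w.length) :
    w[i] = u (j + i) := by
  rw [← List.getElem_of_eq h (by simpa), getElem_factorAt]

lemma occursAt_factorAt (u : ℕ → A) (j n : ℕ) : OccursAt u (factorAt u j n) j := by
  rw [OccursAt, length_factorAt]

lemma occursAt_append : OccursAt u (v ++ w) j ↔ OccursAt u v j ∧ OccursAt u w (j + v.length) := by
  rw [OccursAt, OccursAt, OccursAt, List.length_append, factorAt_add]
  exact ⟨fun h => List.append_inj h (by simp), fun ⟨h₁, h₂⟩ => by rw [h₁, h₂]⟩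

lemma occursAt_singleton : OccursAt u [c] j ↔ u j = c := by
  rw [OccursAt, List.length_singleton, factorAt_one, List.singleton_inj]

lemma occursAt_cons : OccursAt u (c :: w) j ↔ u j = c ∧ OccursAt u w (j + 1) := by
  rw [← List.singleton_append, occursAt_append, OccursAt, List.length_singleton, factorAt_one,
    List.singleton_inj]

lemma OccursAt.apply_add_eq (hj : OccursAt u w j) (hk : OccursAt u w k) (hi : i < w.length) :
    u (j + i) = u (k + i) := by
  rw [← hj.getElem_eq i hi, hk.getElem_eq i hi]

lemma OccursAt.factorAt_add_eq (hj : OccursAt u w j) (hk : OccursAt u w k)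
    (hl : l + n ≤ w.length) : factorAt u (j + l) n = factorAt u (k + l) n :=
  List.ext_getElem (by simp) fun i _ _ => by
    simpa [Nat.add_assoc] using hj.apply_add_eq hk (i := l + i) (by simp_all; omega)

lemma OccursAt.shift (hj : OccursAt u w j) (hk : OccursAt u w k) (hl : l + v.length ≤ w.length)
    (h : OccursAt u v (j + l)) : OccursAt u v (k + l) := by
  rw [OccursAt, ← hj.factorAt_add_eq hk hl, h]

end Words

section Recurrence

variable {u : ℕ → A} {v w : List A} {j : ℕ}

lemma PropertyR.recurrent {m : ℕ} (h : PropertyR u m) (hm : m ≠ 0) : Recurrent u := by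
  intro w hw
  obtain ⟨-, j, k, hjk, hj, hk, -⟩ :=
    Set.nonempty_of_ncard_ne_zero (s := returnWords u w) (by rw [(h w hw).2]; exact hm)
  exact ⟨j, k, hjk, hj, hk⟩

/-- The prefix of length `j + |w|` recurs, carrying a later copy of this occurrence of `w`. -/
lemma Recurrent.exists_lt_occursAt (hu : Recurrent u) (hj : OccursAt u w j) :
    ∃ k, j < k ∧ OccursAt u w k := by
  obtain ⟨p, q, hpq, -, hq⟩ := hu _ ⟨0, occursAt_factorAt u 0 (j + w.length)⟩
  refine ⟨q + j, by omega, (occursAt_factorAt u 0 _).shift hq (by simp) ?_⟩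
  rwa [zero_add]

lemma Recurrent.infinite_setOf_occursAt (hu : Recurrent u) (hw : IsFactor u w) :
    {j | OccursAt u w j}.Infinite := by
  intro hfin
  obtain ⟨m, hm, hmax⟩ := Set.exists_max_image _ id hfin hw
  obtain ⟨k, hmk, hk⟩ := hu.exists_lt_occursAt hm
  exact (hmax k hk).not_gt hmk

/-- Move the factor spanning both occurrences to one of its occurrences beyond `N`. -/
lemma Recurrent.exists_returnWord_ge (hu : Recurrent u) (hv : v ∈ returnWords u w) (N : ℕ) :
    ∃ j k, N ≤ j ∧ j < k ∧ OccursAt u w j ∧ OccursAt u w k ∧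
      (∀ l, j < l → l < k → ¬ OccursAt u w l) ∧ v = factorAt u j (k - j) := by
  obtain ⟨j₀, k₀, hjk, hj, hk, hbetween, rfl⟩ := hv
  have h₀ := occursAt_factorAt u j₀ (k₀ - j₀ + w.length)
  obtain ⟨p, hp, hNp⟩ := (hu.infinite_setOf_occursAt ⟨_, h₀⟩).exists_gt N
  have hcopy : ∀ l, l + w.length ≤ k₀ - j₀ + w.length →
      (OccursAt u w (j₀ + l) ↔ OccursAt u w (p + l)) := fun l hl =>
    ⟨h₀.shift hp (by simpa using hl), hp.shift h₀ (by simpa using hl)⟩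
  refine ⟨p, p + (k₀ - j₀), hNp.le, by omega, ?_, ?_, ?_, ?_⟩
  · simpa using (hcopy 0 (by omega)).1 (by simpa using hj)
  · exact (hcopy _ le_rfl).1 (by rwa [Nat.add_sub_cancel' hjk.le])
  · intro l hl₁ hl₂ hl
    have := (hcopy (l - p) (by omega)).2 (by rwa [Nat.add_sub_cancel' hl₁.le])
    exact hbetween _ (by omega) (by omega) this
  · simpa using h₀.factorAt_add_eq hp (l := 0) (n := k₀ - j₀) (by simp)

end Recurrence

section PairGraph

variable {α β : Type*} {P : Set (α × β)}

def pairGraph (P : Set (α × β)) : SimpleGraph (Prod.fst '' P ⊕ Prod.snd '' P) :=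
  SimpleGraph.fromRel fun x y => ∃ c d, x = .inl c ∧ y = .inr d ∧ (c.1, d.1) ∈ P

lemma pairGraph_adj {p : α × β} (hp : p ∈ P) :
    (pairGraph P).Adj (.inl ⟨p.1, Set.mem_image_of_mem _ hp⟩)
      (.inr ⟨p.2, Set.mem_image_of_mem _ hp⟩) :=
  (SimpleGraph.fromRel_adj ..).2 ⟨Sum.inl_ne_inr, .inl ⟨_, _, rfl, rfl, hp⟩⟩

lemma exists_reachable_inl_pairGraph (z : Prod.fst '' P ⊕ Prod.snd '' P) :
    ∃ p, ∃ hp : p ∈ P, (pairGraph P).Reachable z (.inl ⟨p.1, Set.mem_image_of_mem _ hp⟩) := by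
  rcases z with ⟨-, p, hp, rfl⟩ | ⟨-, p, hp, rfl⟩
  · exact ⟨p, hp, .rfl⟩
  · exact ⟨p, hp, (pairGraph_adj hp).symm.reachable⟩

lemma card_edgeSet_pairGraph_le (hP : P.Finite) :
    Nat.card (pairGraph P).edgeSet ≤ P.ncard := by
  have := hP.to_subtype
  rw [← Nat.card_coe_set_eq]
  refine Nat.card_le_card_of_surjective
    (fun p : P => ⟨s(_, _), (SimpleGraph.mem_edgeSet _).2 (pairGraph_adj p.2)⟩) ?_
  rintro ⟨e, he⟩
  induction e using Sym2.ind with | _ x y => ?_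
  obtain ⟨-, ⟨c, d, rfl, rfl, hcd⟩ | ⟨c, d, rfl, rfl, hcd⟩⟩ :=
    (SimpleGraph.fromRel_adj ..).1 ((SimpleGraph.mem_edgeSet _).1 he)
  · exact ⟨⟨_, hcd⟩, rfl⟩
  · exact ⟨⟨_, hcd⟩, Subtype.ext Sym2.eq_swap⟩

/-- A connected graph has at most one more vertex than edges, so `pairGraph P` is disconnected;
`C` and `D` are the two sides of a component. -/
lemma exists_split_of_ncard_add_one_lt (hP : P.Finite)
    (h : P.ncard + 1 < (Prod.fst '' P).ncard + (Prod.snd '' P).ncard) :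
    ∃ (C : Set α) (D : Set β),
      (∀ p ∈ P, p.1 ∈ C ↔ p.2 ∈ D) ∧ (∃ p ∈ P, p.1 ∈ C) ∧ ∃ p ∈ P, p.1 ∉ C := by
  have := (hP.image Prod.fst).to_subtype
  have := (hP.image Prod.snd).to_subtype
  obtain ⟨p₀, hp₀⟩ : P.Nonempty := by
    by_contra hP₀
    simp [Set.not_nonempty_iff_eq_empty.1 hP₀] at h
  have hpre : ¬ (pairGraph P).Preconnected := fun hpre => by
    have : Nonempty (Prod.fst '' P ⊕ Prod.snd '' P) := ⟨.inl ⟨p₀.1, Set.mem_image_of_mem _ hp₀⟩⟩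
    have hV := (SimpleGraph.Connected.mk hpre).card_vert_le_card_edgeSet_add_one
    rw [Nat.card_sum, Nat.card_coe_set_eq, Nat.card_coe_set_eq] at hV
    have := card_edgeSet_pairGraph_le hP
    omega
  simp only [SimpleGraph.Preconnected, not_forall] at hpre
  obtain ⟨x, y, hxy⟩ := hpre
  refine ⟨{c | ∃ hc, (pairGraph P).Reachable x (.inl ⟨c, hc⟩)},
    {d | ∃ hd, (pairGraph P).Reachable x (.inr ⟨d, hd⟩)}, fun p hp => ?_, ?_, ?_⟩
  · exact ⟨fun ⟨_, hr⟩ => ⟨_, hr.trans (pairGraph_adj hp).reachable⟩,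
      fun ⟨_, hr⟩ => ⟨_, hr.trans (pairGraph_adj hp).symm.reachable⟩⟩
  · obtain ⟨p, hp, hx⟩ := exists_reachable_inl_pairGraph x
    exact ⟨p, hp, _, hx⟩
  · obtain ⟨p, hp, hy⟩ := exists_reachable_inl_pairGraph y
    exact ⟨p, hp, fun ⟨_, hr⟩ => hxy (hr.trans hy.symm)⟩

end PairGraph

section Visits

variable {α : Type*} {e : ℕ → α} {S C : Set α} {V : Set (List α)} {i j k : α} {n m m' : ℕ}

def NextVisit (e : ℕ → α) (S : Set α) (n m : ℕ) : Prop :=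
  0 < m ∧ e (n + m) ∈ S ∧ ∀ l, 0 < l → l < m → e (n + l) ∉ S

def returnBlocks (e : ℕ → α) (S : Set α) : Set (List α) :=
  {x | ∃ n m, e n ∈ S ∧ NextVisit e S n m ∧ x = factorAt e n m}

def shiftedReturnBlocks (e : ℕ → α) (S : Set α) : Set (List α) :=
  {x | ∃ n m, e n ∈ S ∧ NextVisit e S n m ∧ x = factorAt e (n + 1) m}

def LeadsTo (e : ℕ → α) (x : α) (T : Set α) : Prop := ∀ n, e n = x → e (n + 1) ∈ T

def EveryLetterRecurs (e : ℕ → α) : Prop := ∀ x N, ∃ n, N < n ∧ e n = x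

lemma NextVisit.unique (h : NextVisit e S n m) (h' : NextVisit e S n m') : m = m' := by
  by_contra hne
  rcases Nat.lt_or_gt_of_ne hne with hlt | hlt
  · exact h'.2.2 m h.1 hlt h.2.1
  · exact h.2.2 m' h'.1 hlt h'.2.1

lemma nextVisit_one (h : e (n + 1) ∈ S) : NextVisit e S n 1 :=
  ⟨one_pos, h, fun l h₁ h₂ => by omega⟩

lemma nextVisit_two (h₁ : e (n + 1) ∉ S) (h₂ : e (n + 2) ∈ S) : NextVisit e S n 2 :=
  ⟨two_pos, h₂, fun l hl₁ hl₂ => by obtain rfl : l = 1 := (by omega); exact h₁⟩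

lemma nextVisit_three (h₁ : e (n + 1) ∉ S) (h₂ : e (n + 2) ∉ S) (h₃ : e (n + 3) ∈ S) :
    NextVisit e S n 3 :=
  ⟨three_pos, h₃, fun l hl₁ hl₂ => by interval_cases l <;> assumption⟩

lemma returnBlocks_subset (h : ∀ n, e n ∈ S → ∃ m, NextVisit e S n m ∧ factorAt e n m ∈ V) :
    returnBlocks e S ⊆ V := by
  rintro x ⟨n, m, hn, hm, rfl⟩
  obtain ⟨m', hm', hV⟩ := h n hn
  rwa [hm.unique hm']

lemma shiftedReturnBlocks_subset
    (h : ∀ n, e n ∈ S → ∃ m, NextVisit e S n m ∧ factorAt e (n + 1) m ∈ V) :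
    shiftedReturnBlocks e S ⊆ V := by
  rintro x ⟨n, m, hn, hm, rfl⟩
  obtain ⟨m', hm', hV⟩ := h n hn
  rwa [hm.unique hm']

lemma EveryLetterRecurs.surjective (he : EveryLetterRecurs e) : Function.Surjective e :=
  fun x => (he x 0).imp fun _ h => h.2

lemma EveryLetterRecurs.mem_of_leadsTo (he : EveryLetterRecurs e) (hC : ∀ x ∈ C, LeadsTo e x C)
    (hi : i ∈ C) (k : α) : k ∈ C := by
  obtain ⟨n, -, rfl⟩ := he i 0
  obtain ⟨n', hnn', rfl⟩ := he k n
  have : ∀ l, e (n + l) ∈ C := fun l => by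
    induction l with
    | zero => exact hi
    | succ l ih => exact hC _ ih _ rfl
  simpa [Nat.add_sub_cancel' hnn'.le] using this (n' - n)

variable (he3 : ∀ n, e n = i ∨ e n = j ∨ e n = k)
include he3

lemma eq_of_mem_of_notMem (hj : j ∉ S) (hk : k ∉ S) (hn : e n ∈ S) : e n = i := by
  rcases he3 n with h | h | h
  · exact h
  · exact absurd (h ▸ hn) hj
  · exact absurd (h ▸ hn) hk

lemma returnBlocks_star (hi : LeadsTo e i {j, k}) (hj : LeadsTo e j {i}) (hk : LeadsTo e k {i})
    (hiS : i ∈ S) (hjS : j ∉ S) (hkS : k ∉ S) : returnBlocks e S ⊆ {[i, j], [i, k]} := by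
  refine returnBlocks_subset fun n hn => ?_
  have hn := eq_of_mem_of_notMem he3 hjS hkS hn
  rcases hi n hn with h₁ | (h₁ : e (n + 1) = k)
  · have h₂ : e (n + 2) = i := hj _ h₁
    exact ⟨2, nextVisit_two (by rwa [h₁]) (by rwa [h₂]),
      by simp [factorAt, List.range_succ, hn, h₁]⟩
  · have h₂ : e (n + 2) = i := hk _ h₁
    exact ⟨2, nextVisit_two (by rwa [h₁]) (by rwa [h₂]),
      by simp [factorAt, List.range_succ, hn, h₁]⟩

section Fork

variable (hi : LeadsTo e i {j}) (hj : LeadsTo e j {i, k})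
include hi hj

lemma returnBlocks_fork (hk : LeadsTo e k {i, k}) (hiS : i ∈ S) (hkS : k ∈ S) (hjS : j ∉ S) :
    returnBlocks e S ⊆ {[i, j], [k]} := by
  refine returnBlocks_subset fun n hn => ?_
  rcases he3 n with hn' | hn' | hn'
  · have h₁ : e (n + 1) = j := hi _ hn'
    have h₂ : e (n + 2) ∈ S := by rcases hj _ h₁ with h₂ | h₂ <;> rwa [h₂]
    exact ⟨2, nextVisit_two (by rwa [h₁]) h₂, by simp [factorAt, List.range_succ, hn', h₁]⟩
  · exact absurd (hn' ▸ hn) hjS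
  · have h₁ : e (n + 1) ∈ S := by rcases hk _ hn' with h₁ | h₁ <;> rwa [h₁]
    exact ⟨1, nextVisit_one h₁, by simp [factorAt, hn']⟩

lemma shiftedReturnBlocks_fork (hk : LeadsTo e k {i, k}) (hjS : j ∈ S) (hkS : k ∈ S)
    (hiS : i ∉ S) : shiftedReturnBlocks e S ⊆ {[k], [i, j]} := by
  refine shiftedReturnBlocks_subset fun n hn => ?_
  have h₁ : e (n + 1) = i ∨ e (n + 1) = k := by
    rcases he3 n with hn' | hn' | hn'
    · exact absurd (hn' ▸ hn) hiS
    · exact hj _ hn'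
    · exact hk _ hn'
  rcases h₁ with h₁ | h₁
  · have h₂ : e (n + 2) = j := hi _ h₁
    exact ⟨2, nextVisit_two (by rwa [h₁]) (by rwa [h₂]),
      by simp [factorAt, List.range_succ, h₁, h₂]⟩
  · exact ⟨1, nextVisit_one (by rwa [h₁]), by simp [factorAt, h₁]⟩

lemma returnBlocks_digon_triangle (hk : LeadsTo e k {i}) (hjS : j ∈ S) (hiS : i ∉ S)
    (hkS : k ∉ S) : returnBlocks e S ⊆ {[j, i], [j, k, i]} := by
  refine returnBlocks_subset fun n hn => ?_
  have hn := eq_of_mem_of_notMem (i := j) (j := i) (k := k)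
    (fun n => by have := he3 n; tauto) hiS hkS hn
  rcases hj n hn with h₁ | (h₁ : e (n + 1) = k)
  · have h₂ : e (n + 2) = j := hi _ h₁
    exact ⟨2, nextVisit_two (by rwa [h₁]) (by rwa [h₂]),
      by simp [factorAt, List.range_succ, hn, h₁]⟩
  · have h₂ : e (n + 2) = i := hk _ h₁
    have h₃ : e (n + 3) = j := hi _ h₂
    exact ⟨3, nextVisit_three (by rwa [h₁]) (by rwa [h₂]) (by rwa [h₃]),
      by simp [factorAt, List.range_succ, hn, h₁, h₂]⟩

end Fork

lemma returnBlocks_loop_triangle (hi : LeadsTo e i {j}) (hj : LeadsTo e j {k})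
    (hk : LeadsTo e k {i, k}) (hkS : k ∈ S) (hiS : i ∉ S) (hjS : j ∉ S) :
    returnBlocks e S ⊆ {[k], [k, i, j]} := by
  refine returnBlocks_subset fun n hn => ?_
  have hn := eq_of_mem_of_notMem (i := k) (j := i) (k := j)
    (fun n => by have := he3 n; tauto) hiS hjS hn
  rcases hk n hn with h₁ | (h₁ : e (n + 1) = k)
  · have h₂ : e (n + 2) = j := hi _ h₁
    have h₃ : e (n + 3) = k := hj _ h₂
    exact ⟨3, nextVisit_three (by rwa [h₁]) (by rwa [h₂]) (by rwa [h₃]),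
      by simp [factorAt, List.range_succ, hn, h₁, h₂]⟩
  · exact ⟨1, nextVisit_one (by rwa [h₁]), by simp [factorAt, hn]⟩

end Visits

section DerivedSequence

variable {ι : Type*} {e : ℕ → ι} {a b : ι → A}

def adjacentPairs (e : ℕ → ι) (a b : ι → A) : Set (A × A) :=
  Set.range fun n => (a (e n), b (e (n + 1)))

lemma adjacentPairs_finite [Finite ι] : (adjacentPairs e a b).Finite :=
  (Set.finite_range fun p : ι × ι => (a p.1, b p.2)).subset
    fun _ ⟨n, hn⟩ => ⟨(e n, e (n + 1)), hn⟩

lemma exists_compatible_sets [Finite ι]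
    (hweak : (adjacentPairs e a b).ncard + 1 <
      (Prod.fst '' adjacentPairs e a b).ncard + (Prod.snd '' adjacentPairs e a b).ncard) :
    ∃ C D : Set A, (∀ n, a (e n) ∈ C ↔ b (e (n + 1)) ∈ D) ∧
      (∃ m m', b m ∈ D ∧ b m' ∉ D) ∧ ∃ m m', a m ∈ C ∧ a m' ∉ C := by
  obtain ⟨C, D, hCD, ⟨-, ⟨n, rfl⟩, hn⟩, -, ⟨n', rfl⟩, hn'⟩ :=
    exists_split_of_ncard_add_one_lt adjacentPairs_finite hweak
  exact ⟨C, D, fun n => hCD _ ⟨n, rfl⟩, ⟨_, _, (hCD _ ⟨n, rfl⟩).1 hn,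
    fun h => hn' ((hCD _ ⟨n', rfl⟩).2 h)⟩, _, _, hn, hn'⟩

lemma fin_three_cases : ∀ i j k m : Fin 3, j ≠ i → k ≠ i → j ≠ k → m = i ∨ m = j ∨ m = k := by
  decide

lemma ncard_range_le_natCard {β : Type*} [Finite ι] (f : ι → β) :
    (Set.range f).ncard ≤ Nat.card ι := by
  rw [← Set.image_univ, ← Set.ncard_univ]
  exact Set.ncard_image_le (Set.toFinite _)

set_option synthInstance.maxSize 1024 in
/-- Read `ic m' = oc m` as "`m'` may follow `m`". For non-constant colourings this forces a letter
followed only by itself, a star `i → {j, k} → i`, or a fork `i → j → {i, k}`, `k → {i, k}`. -/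
lemma exists_transition_pattern : ∀ ic oc : Fin 3 → Bool,
    (∃ m m', ic m ≠ ic m') → (∃ m m', oc m ≠ oc m') →
    (∃ i, ∀ m, ic m = oc i → m = i) ∨
    (∃ i j k, j ≠ i ∧ k ≠ i ∧ j ≠ k ∧ (∀ m, ic m = oc i → m = j ∨ m = k) ∧
      (∀ m, ic m = oc j → m = i) ∧ (∀ m, ic m = oc k → m = i) ∧ ic j ≠ ic i ∧ ic k ≠ ic i) ∨
    (∃ i j k, j ≠ i ∧ k ≠ i ∧ j ≠ k ∧ (∀ m, ic m = oc i → m = j) ∧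
      (∀ m, ic m = oc j → m = i ∨ m = k) ∧ (∀ m, ic m = oc k → m = i ∨ m = k) ∧
      ic j ≠ ic i ∧ ic j ≠ ic k ∧ oc i ≠ oc j ∧ oc i ≠ oc k) := by
  decide

variable {e : ℕ → Fin 3} {a b : Fin 3 → A} {i j k : Fin 3}

lemma mem_adjacentPairs_of_not_leadsTo {x y z : Fin 3} (h : LeadsTo e x {y, z})
    (hz : ¬ LeadsTo e x {z}) : (a x, b y) ∈ adjacentPairs e a b := by
  simp only [LeadsTo, not_forall] at hz
  obtain ⟨n, hn, hnz⟩ := hz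
  obtain hy | hz := h n hn
  · exact ⟨n, by simp [hn, hy]⟩
  · exact absurd hz hnz

/-- If `j → i`, `j → k`, `k → i` and `k → k` all occurred besides `i → j`, they would give five
distinct pairs, while there are at most three letters on each side. -/
lemma leadsTo_of_ncard_adjacentPairs (he : EveryLetterRecurs e)
    (hweak : (adjacentPairs e a b).ncard + 1 <
      (Prod.fst '' adjacentPairs e a b).ncard + (Prod.snd '' adjacentPairs e a b).ncard)
    (hi : LeadsTo e i {j}) (hj : LeadsTo e j {i, k}) (hk : LeadsTo e k {i, k})
    (haij : a i ≠ a j) (haik : a i ≠ a k) (hajk : a j ≠ a k)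
    (hbji : b j ≠ b i) (hbjk : b j ≠ b k) (hbik : b i ≠ b k) :
    LeadsTo e j {k} ∨ LeadsTo e j {i} ∨ LeadsTo e k {k} ∨ LeadsTo e k {i} := by
  by_contra! h
  obtain ⟨hjk, hji, hkk, hki⟩ := h
  obtain ⟨n, -, hn⟩ := he i 0
  have hn' : e (n + 1) = j := hi n hn
  have hsub : {(a i, b j), (a j, b i), (a j, b k), (a k, b i), (a k, b k)} ⊆
      adjacentPairs e a b := by
    rintro p (rfl | rfl | rfl | rfl | rfl)
    · exact ⟨n, by simp [hn, hn']⟩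
    · exact mem_adjacentPairs_of_not_leadsTo hj hjk
    · exact mem_adjacentPairs_of_not_leadsTo (Set.pair_comm i k ▸ hj) hji
    · exact mem_adjacentPairs_of_not_leadsTo hk hkk
    · exact mem_adjacentPairs_of_not_leadsTo (Set.pair_comm i k ▸ hk) hki
  have h5 := Set.ncard_le_ncard hsub adjacentPairs_finite
  have hfst : (Prod.fst '' adjacentPairs e a b).ncard ≤ 3 :=
    (Set.ncard_le_ncard (by rintro _ ⟨_, ⟨n, rfl⟩, rfl⟩; exact ⟨_, rfl⟩)).trans
      ((ncard_range_le_natCard a).trans_eq (Nat.card_fin 3))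
  have hsnd : (Prod.snd '' adjacentPairs e a b).ncard ≤ 3 :=
    (Set.ncard_le_ncard (by rintro _ ⟨_, ⟨n, rfl⟩, rfl⟩; exact ⟨_, rfl⟩)).trans
      ((ncard_range_le_natCard b).trans_eq (Nat.card_fin 3))
  rw [Set.ncard_insert_of_notMem, Set.ncard_insert_of_notMem, Set.ncard_insert_of_notMem,
    Set.ncard_insert_of_notMem, Set.ncard_singleton] at h5
  · omega
  all_goals simp [*, Ne.symm hbik]

variable (he : EveryLetterRecurs e)
  (hR : ∀ m x y, ¬ returnBlocks e {m' | b m' = b m} ⊆ {x, y})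
  (hL : ∀ m x y, ¬ shiftedReturnBlocks e {m' | a m' = a m} ⊆ {x, y})
include he hR hL

lemma EveryLetterRecurs.false_of_fork
    (hweak : (adjacentPairs e a b).ncard + 1 <
      (Prod.fst '' adjacentPairs e a b).ncard + (Prod.snd '' adjacentPairs e a b).ncard)
    (hji : j ≠ i) (hki : k ≠ i) (hjk : j ≠ k)
    (hi : LeadsTo e i {j}) (hj : LeadsTo e j {i, k}) (hk : LeadsTo e k {i, k})
    (hbji : b j ≠ b i) (hbjk : b j ≠ b k) (haij : a i ≠ a j) (haik : a i ≠ a k) : False := by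
  have he3 : ∀ n, e n = i ∨ e n = j ∨ e n = k := fun n => fin_three_cases i j k (e n) hji hki hjk
  by_cases hbik : b i = b k
  · exact hR i _ _ (returnBlocks_fork he3 hi hj hk rfl hbik.symm hbji)
  by_cases hajk : a j = a k
  · exact hL j _ _ (shiftedReturnBlocks_fork he3 hi hj hk rfl hajk.symm haij)
  rcases leadsTo_of_ncard_adjacentPairs he hweak hi hj hk haij haik hajk hbji hbjk hbik with
    hj' | hj' | hk' | hk'
  · exact hR k _ _ (returnBlocks_loop_triangle he3 hi hj' hk rfl hbik hbjk)
  · have hC : ∀ x ∈ ({i, j} : Set (Fin 3)), LeadsTo e x {i, j} := by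
      rintro x (rfl | rfl) n hn
      exacts [.inr (hi n hn), .inl (hj' n hn)]
    rcases he.mem_of_leadsTo hC (Set.mem_insert i _) k with h | h
    exacts [hki h, hjk h.symm]
  · have := he.mem_of_leadsTo (C := {k}) (by rintro x rfl; exact hk') rfl i
    exact hki this.symm
  · exact hR j _ _ (returnBlocks_digon_triangle he3 hi hj hk' rfl hbji.symm hbjk.symm)

theorem EveryLetterRecurs.ncard_image_fst_add_ncard_image_snd_le :
    (Prod.fst '' adjacentPairs e a b).ncard + (Prod.snd '' adjacentPairs e a b).ncard ≤
      (adjacentPairs e a b).ncard + 1 := by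
  classical
  by_contra! hweak
  obtain ⟨C, D, hCD, ⟨m₁, m₂, hD₁, hD₂⟩, m₃, m₄, hC₃, hC₄⟩ := exists_compatible_sets hweak
  set ic : Fin 3 → Bool := fun m => decide (b m ∈ D)
  set oc : Fin 3 → Bool := fun m => decide (a m ∈ C)
  have hlead : ∀ {i} {T : Set (Fin 3)}, (∀ m, ic m = oc i → m ∈ T) → LeadsTo e i T :=
    fun h n hn => h _ (by simp [ic, oc, ← hn, hCD])
  have hb : ∀ {m m'}, ic m ≠ ic m' → b m ≠ b m' := fun h hb => h (by simp [ic, hb])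
  have ha : ∀ {m m'}, oc m ≠ oc m' → a m ≠ a m' := fun h ha => h (by simp [oc, ha])
  rcases exists_transition_pattern ic oc ⟨m₁, m₂, by simp [ic, hD₁, hD₂]⟩
      ⟨m₃, m₄, by simp [oc, hC₃, hC₄]⟩ with
    ⟨i, hi⟩ | ⟨i, j, k, hji, hki, hjk, hi, hj, hk, hbj, hbk⟩ |
      ⟨i, j, k, hji, hki, hjk, hi, hj, hk, hbji, hbjk, haij, haik⟩
  · have := he.mem_of_leadsTo (C := {i}) (by rintro x rfl; exact hlead hi) rfl (i + 1)
    exact (show ∀ x : Fin 3, x + 1 ≠ x by decide) i this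
  · exact hR i _ _ (returnBlocks_star (fun n => fin_three_cases i j k (e n) hji hki hjk)
      (hlead hi) (hlead hj) (hlead hk) rfl (hb hbj) (hb hbk))
  · exact he.false_of_fork hR hL hweak hji hki hjk (hlead hi) (hlead hj) (hlead hk) (hb hbji)
      (hb hbjk) (ha haij) (ha haik)

end DerivedSequence

section Extensions

variable {u : ℕ → A} {w : List A}

lemma leftExt_eq_image_fst_extPairs (u : ℕ → A) (w : List A) :
    leftExt u w = Prod.fst '' extPairs u w := by
  ext c
  constructor
  · rintro ⟨p, hp⟩
    refine ⟨(c, u (p + (c :: w).length)), ⟨p, ?_⟩, rfl⟩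
    rw [← List.cons_append, occursAt_append]
    exact ⟨hp, occursAt_factorAt u _ 1⟩
  · rintro ⟨⟨c, d⟩, ⟨p, hp⟩, rfl⟩
    rw [← List.cons_append, occursAt_append] at hp
    exact ⟨p, hp.1⟩

lemma Recurrent.rightExt_eq_image_snd_extPairs (hu : Recurrent u) :
    rightExt u w = Prod.snd '' extPairs u w := by
  ext d
  constructor
  · intro hd
    obtain ⟨p, hp, hpos⟩ := (hu.infinite_setOf_occursAt hd).exists_gt 0
    refine ⟨(u (p - 1), d), ⟨p - 1, occursAt_cons.2 ⟨rfl, ?_⟩⟩, rfl⟩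
    rwa [Nat.sub_add_cancel hpos]
  · rintro ⟨⟨c, d⟩, ⟨p, hp⟩, rfl⟩
    exact ⟨p + 1, (occursAt_cons.1 hp).2⟩

end Extensions

lemma exists_fin_injective_range_eq {β : Type*} {s : Set β} {n : ℕ} (hs : s.Finite)
    (h : s.ncard = n) : ∃ f : Fin n → β, Function.Injective f ∧ Set.range f = s := by
  have := hs.to_subtype
  let σ : s ≃ Fin n := (Finite.equivFin s).trans (finCongr (by rw [Nat.card_coe_set_eq, h]))
  refine ⟨fun m => σ.symm m, Subtype.val_injective.comp σ.symm.injective, ?_⟩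
  ext x
  exact ⟨by rintro ⟨m, rfl⟩; exact (σ.symm m).2, fun hx => ⟨σ ⟨x, hx⟩, by simp⟩⟩

section Occurrences

variable {u : ℕ → A} {w v : List A} {j n : ℕ}

noncomputable def occ (u : ℕ → A) (w : List A) : ℕ → ℕ := Nat.nth (OccursAt u w)

noncomputable def ret (u : ℕ → A) (w : List A) (n : ℕ) : List A :=
  factorAt u (occ u w n) (occ u w (n + 1) - occ u w n)

lemma exists_occ_eq (h : OccursAt u w j) : ∃ n, occ u w n = j := by
  classical
  exact ⟨_, Nat.nth_count h⟩

variable (hinf : {j | OccursAt u w j}.Infinite)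
include hinf

lemma occursAt_occ (n : ℕ) : OccursAt u w (occ u w n) := Nat.nth_mem_of_infinite hinf n

lemma occ_strictMono : StrictMono (occ u w) := Nat.nth_strictMono hinf

lemma not_occursAt_of_lt_of_lt (h₁ : occ u w n < j) (h₂ : j < occ u w (n + 1)) :
    ¬ OccursAt u w j := by
  intro hj
  obtain ⟨m, rfl⟩ := exists_occ_eq hj
  rw [(occ_strictMono hinf).lt_iff_lt] at h₁ h₂
  omega

lemma occ_succ_pos (n : ℕ) : 0 < occ u w (n + 1) :=
  (Nat.zero_le _).trans_lt (occ_strictMono hinf n.lt_add_one)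

lemma ret_mem_returnWords (n : ℕ) : ret u w n ∈ returnWords u w :=
  ⟨_, _, occ_strictMono hinf n.lt_add_one, occursAt_occ hinf n, occursAt_occ hinf _,
    fun _ => not_occursAt_of_lt_of_lt hinf, rfl⟩

lemma ret_append_occursAt (n : ℕ) : OccursAt u (ret u w n ++ w) (occ u w n) := by
  rw [occursAt_append, ret, length_factorAt,
    Nat.add_sub_cancel' (occ_strictMono hinf n.lt_succ_self).le]
  exact ⟨occursAt_factorAt .., occursAt_occ hinf _⟩

lemma factorAt_occ (n m : ℕ) :
    factorAt u (occ u w n) (occ u w (n + m) - occ u w n) =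
      ((List.range m).map fun i => ret u w (n + i)).flatten := by
  induction m with
  | zero => simp [factorAt]
  | succ m ih =>
    have h₁ := (occ_strictMono hinf).monotone (Nat.le_add_right n m)
    have h₂ := occ_strictMono hinf (n + m).lt_add_one
    rw [← Nat.add_assoc, show occ u w (n + m + 1) - occ u w n =
        (occ u w (n + m) - occ u w n) + (occ u w (n + m + 1) - occ u w (n + m)) by omega,
      factorAt_add, ih, Nat.add_sub_cancel' h₁, List.range_succ, List.map_append,
      List.flatten_append]
    simp [ret]

lemma exists_gt_ret_eq (hu : Recurrent u) (hv : v ∈ returnWords u w) (N : ℕ) :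
    ∃ n, N < n ∧ ret u w n = v := by
  obtain ⟨j, k, hj, hjk, hjo, hko, hbetween, rfl⟩ := hu.exists_returnWord_ge hv (occ u w (N + 1))
  obtain ⟨n, rfl⟩ := exists_occ_eq hjo
  obtain ⟨n', rfl⟩ := exists_occ_eq hko
  have hmono : ∀ {p q}, occ u w p < occ u w q ↔ p < q := (occ_strictMono hinf).lt_iff_lt
  rw [hmono] at hjk
  rw [(occ_strictMono hinf).le_iff_le] at hj
  obtain rfl : n' = n + 1 := by
    by_contra hne
    exact hbetween _ (hmono.2 (Nat.lt_succ_self n)) (hmono.2 (by omega)) (occursAt_occ hinf _)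
  exact ⟨n, by omega, rfl⟩

lemma Recurrent.exists_derivedSequence (hu : Recurrent u) (hfin : (returnWords u w).Finite)
    {r : ℕ} (hr : (returnWords u w).ncard = r) :
    ∃ (e : ℕ → Fin r) (ℓ : Fin r → List A), (∀ n, ret u w n = ℓ (e n)) ∧ EveryLetterRecurs e := by
  obtain ⟨ℓ, hℓ, hrange⟩ := exists_fin_injective_range_eq hfin hr
  have hret : ∀ n, ∃ m, ret u w n = ℓ m := fun n => by
    obtain ⟨m, hm⟩ := hrange ▸ ret_mem_returnWords hinf n
    exact ⟨m, hm.symm⟩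
  choose e he using hret
  refine ⟨e, ℓ, he, fun m N => ?_⟩
  obtain ⟨n, hn, hnm⟩ := exists_gt_ret_eq hinf hu (by rw [← hrange]; exact ⟨m, rfl⟩) N
  exact ⟨n, hn, hℓ (by rw [← he, hnm])⟩

end Occurrences

section Coding

variable {u : ℕ → A} {w : List A} {ι : Type*} {e : ℕ → ι} {ℓ : ι → List A} {a b : ι → A}
  (hinf : {j | OccursAt u w j}.Infinite)
include hinf

lemma factorAt_occ_eq_flatten (he : ∀ n, ret u w n = ℓ (e n)) (n m : ℕ) :
    factorAt u (occ u w n) (occ u w (n + m) - occ u w n) = ((factorAt e n m).map ℓ).flatten := by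
  rw [factorAt_occ hinf]
  simp [factorAt, he, Function.comp_def]

lemma exists_letters (he : ∀ n, ret u w n = ℓ (e n)) :
    ∃ a b : ι → A, (∀ n, u (occ u w (n + 1) - 1) = a (e n)) ∧
      ∀ n, u (occ u w n + w.length) = b (e n) := by
  have hlen : ∀ n, (ret u w n).length = occ u w (n + 1) - occ u w n := by simp [ret]
  have hpos : ∀ n, occ u w n < occ u w (n + 1) := fun n => occ_strictMono hinf n.lt_add_one
  have key : ∀ {n n'}, e n = e n' → ∀ i < (ret u w n ++ w).length,
      u (occ u w n + i) = u (occ u w n' + i) := fun h i hi =>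
    (ret_append_occursAt hinf _).apply_add_eq
      (by rw [he, h, ← he]; exact ret_append_occursAt hinf _) hi
  refine ⟨Function.extend e (fun n => u (occ u w (n + 1) - 1)) fun _ => u 0,
    Function.extend e (fun n => u (occ u w n + w.length)) fun _ => u 0,
    fun n => (Function.FactorsThrough.extend_apply (f := e)
      (g := fun n => u (occ u w (n + 1) - 1)) (fun n n' h => ?_) _ n).symm,
    fun n => (Function.FactorsThrough.extend_apply (f := e)
      (g := fun n => u (occ u w n + w.length)) (fun n n' h => ?_) _ n).symm⟩
  · have hl : (ret u w n).length = (ret u w n').length := by rw [he, he, h]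
    rw [hlen, hlen] at hl
    have h₁ := hpos n
    have h₂ := hpos n'
    have := key h (occ u w (n + 1) - occ u w n - 1) (by simp only [List.length_append, hlen]; omega)
    convert this using 2 <;> omega
  · have h₁ := hpos n
    exact key h _ (by simp only [List.length_append, hlen]; omega)

variable (hu : Recurrent u) (ha : ∀ n, u (occ u w (n + 1) - 1) = a (e n))
  (hb : ∀ n, u (occ u w n + w.length) = b (e n))

include hu ha hb in
lemma extPairs_eq_adjacentPairs : extPairs u w = adjacentPairs e a b := by
  ext ⟨c, d⟩
  constructor
  · rintro ⟨p, hp⟩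
    obtain ⟨q, hq, hq₀⟩ := (hu.infinite_setOf_occursAt ⟨p, hp⟩).exists_gt (occ u w 0)
    change OccursAt u (c :: (w ++ [d])) q at hq
    rw [occursAt_cons, occursAt_append, occursAt_singleton] at hq
    obtain ⟨hc, hw, hd⟩ := hq
    obtain ⟨n₁, hn₁⟩ := exists_occ_eq hw
    obtain ⟨n, rfl⟩ := Nat.exists_eq_succ_of_ne_zero (n := n₁) fun h₀ => by
      have := (occ_strictMono hinf).monotone (Nat.zero_le 0)
      subst h₀; omega
    refine ⟨n, ?_⟩
    simp only [Prod.mk.injEq]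
    rw [← ha, ← hb, hn₁, Nat.add_sub_cancel]
    exact ⟨hc, hd⟩
  · rintro ⟨n, hn⟩
    simp only [Prod.mk.injEq] at hn
    obtain ⟨rfl, rfl⟩ := hn
    change IsFactor u (a (e n) :: (w ++ [b (e (n + 1))]))
    refine ⟨occ u w (n + 1) - 1, ?_⟩
    rw [occursAt_cons, occursAt_append, occursAt_singleton,
      Nat.sub_add_cancel (occ_succ_pos hinf n)]
    exact ⟨ha n, occursAt_occ hinf _, hb _⟩

include hb in
lemma returnWords_append_singleton_subset (he : ∀ n, ret u w n = ℓ (e n)) (c : A) :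
    returnWords u (w ++ [c]) ⊆
      (fun x => (x.map ℓ).flatten) '' returnBlocks e {m | b m = c} := by
  have hocc : ∀ {p}, OccursAt u (w ++ [c]) p ↔ ∃ n, occ u w n = p ∧ b (e n) = c := by
    intro p
    rw [occursAt_append, occursAt_singleton]
    constructor
    · rintro ⟨hw, hc⟩
      obtain ⟨n, rfl⟩ := exists_occ_eq hw
      exact ⟨n, rfl, by rw [← hb, hc]⟩
    · rintro ⟨n, rfl, hc⟩
      exact ⟨occursAt_occ hinf n, by rw [hb, hc]⟩
  have hmono : ∀ {p q}, occ u w p < occ u w q ↔ p < q := (occ_strictMono hinf).lt_iff_lt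
  rintro v ⟨j, k, hjk, hj, hk, hbetween, rfl⟩
  obtain ⟨n, rfl, hn⟩ := hocc.1 hj
  obtain ⟨n', rfl, hn'⟩ := hocc.1 hk
  have hnn' := hmono.1 hjk
  obtain ⟨m, rfl⟩ := Nat.exists_eq_add_of_le hnn'.le
  refine ⟨factorAt e n m, ⟨n, m, hn, ⟨by omega, hn', fun l hl₁ hl₂ hl => hbetween _
    (hmono.2 (by omega)) (hmono.2 (by omega)) (hocc.2 ⟨_, rfl, hl⟩)⟩, rfl⟩, ?_⟩
  exact (factorAt_occ_eq_flatten hinf he n m).symm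

include hu ha in
/-- Beyond the first occurrence of `w`, `c w` occurs exactly one letter before the occurrences
of `w` that follow a return word ending in `c`. -/
lemma returnWords_cons_subset (he : ∀ n, ret u w n = ℓ (e n)) (c : A) :
    returnWords u (c :: w) ⊆
      (fun x => c :: ((x.map ℓ).flatten).dropLast) '' shiftedReturnBlocks e {m | a m = c} := by
  have hmono : ∀ {p q}, occ u w p < occ u w q ↔ p < q := (occ_strictMono hinf).lt_iff_lt
  have hocc : ∀ {p}, occ u w 0 ≤ p →
      (OccursAt u (c :: w) p ↔ ∃ n, occ u w (n + 1) = p + 1 ∧ a (e n) = c) := by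
    intro p hp
    rw [occursAt_cons]
    constructor
    · rintro ⟨hc, hw⟩
      obtain ⟨n₁, hn₁⟩ := exists_occ_eq hw
      obtain ⟨n, rfl⟩ := Nat.exists_eq_succ_of_ne_zero (n := n₁) fun h₀ => by
        subst h₀; omega
      exact ⟨n, hn₁, by rw [← ha, hn₁, Nat.add_sub_cancel, hc]⟩
    · rintro ⟨n, hn, hc⟩
      exact ⟨by rw [← hc, ← ha, hn, Nat.add_sub_cancel], hn ▸ occursAt_occ hinf _⟩
  intro v hv
  obtain ⟨j, k, hj₀, hjk, hj, hk, hbetween, rfl⟩ := hu.exists_returnWord_ge hv (occ u w 0)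
  obtain ⟨n, hn, hcn⟩ := (hocc hj₀).1 hj
  obtain ⟨n', hn', hcn'⟩ := (hocc (by omega)).1 hk
  have hnn' : n < n' := by
    have := hmono.1 (show occ u w (n + 1) < occ u w (n' + 1) by omega)
    omega
  obtain ⟨m, rfl⟩ := Nat.exists_eq_add_of_le hnn'.le
  refine ⟨factorAt e (n + 1) m, ⟨n, m, hcn, ⟨by omega, hcn', fun l hl₁ hl₂ hl => ?_⟩, rfl⟩, ?_⟩
  · have h₁ := hmono.2 (show n + 1 < n + l + 1 by omega)
    have h₂ := hmono.2 (show n + l + 1 < n + m + 1 by omega)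
    exact hbetween (occ u w (n + l + 1) - 1) (by omega) (by omega)
      ((hocc (by omega)).2 ⟨n + l, by omega, hl⟩)
  · have hflat := factorAt_occ_eq_flatten hinf he (n + 1) m
    rw [show n + 1 + m = n + m + 1 by omega, hn, hn', show k + 1 - (j + 1) = k - j by omega]
      at hflat
    show c :: _ = _
    rw [← hflat, factorAt_eq_cons_dropLast u j (by omega), (occursAt_cons.1 hj).1]

end Coding

section PropertyR

variable {u : ℕ → A} {w g : List A}

lemma PropertyR.false_of_returnWords_subset_image {β : Type*} {f : List β → List A}
    {B : Set (List β)} {x y : List β} (h : PropertyR u 3) (hg : IsFactor u g)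
    (hsub : returnWords u g ⊆ f '' B) (hB : B ⊆ {x, y}) : False := by
  have h₃ := (h g hg).2
  have h₂ := Set.ncard_le_ncard (hsub.trans (Set.image_mono hB)) (Set.toFinite _)
  rw [Set.image_pair] at h₂
  have := Set.ncard_insert_le (f x) {f y}
  rw [Set.ncard_singleton] at this
  omega

variable {ι : Type*} {e : ℕ → ι} {ℓ : ι → List A} {a b : ι → A} (h : PropertyR u 3)
  (hinf : {j | OccursAt u w j}.Infinite) (he : ∀ n, ret u w n = ℓ (e n))
include h hinf he

lemma PropertyR.not_returnBlocks_subset (hb : ∀ n, u (occ u w n + w.length) = b (e n))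
    (hsurj : Function.Surjective e) (m : ι) (x y : List ι) :
    ¬ returnBlocks e {m' | b m' = b m} ⊆ {x, y} := by
  obtain ⟨n, rfl⟩ := hsurj m
  exact h.false_of_returnWords_subset_image
    ⟨occ u w n, occursAt_append.2 ⟨occursAt_occ hinf n, occursAt_singleton.2 (hb n)⟩⟩
    (returnWords_append_singleton_subset hinf hb he _)

lemma PropertyR.not_shiftedReturnBlocks_subset (hu : Recurrent u)
    (ha : ∀ n, u (occ u w (n + 1) - 1) = a (e n)) (hsurj : Function.Surjective e) (m : ι)
    (x y : List ι) : ¬ shiftedReturnBlocks e {m' | a m' = a m} ⊆ {x, y} := by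
  obtain ⟨n, rfl⟩ := hsurj m
  refine h.false_of_returnWords_subset_image ⟨occ u w (n + 1) - 1, ?_⟩
    (returnWords_cons_subset hinf hu ha he _)
  rw [occursAt_cons, Nat.sub_add_cancel (occ_succ_pos hinf n)]
  exact ⟨ha n, occursAt_occ hinf _⟩

end PropertyR

theorem no_weakBispecial_of_propertyR_three_general (u : ℕ → A)
    (h : PropertyR u 3) : ∀ w, ¬ WeakBispecial u w := by
  rintro w ⟨hw, hneg⟩
  have hu := h.recurrent three_ne_zero
  have hinf := hu.infinite_setOf_occursAt hw
  obtain ⟨e, ℓ, he, hrec⟩ := hu.exists_derivedSequence hinf (h w hw).1 (h w hw).2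
  obtain ⟨a, b, ha, hb⟩ := exists_letters hinf he
  have hB := hrec.ncard_image_fst_add_ncard_image_snd_le
    (h.not_returnBlocks_subset hinf he hb hrec.surjective)
    (h.not_shiftedReturnBlocks_subset hinf he hu ha hrec.surjective)
  rw [bilateralOrder, leftExt_eq_image_fst_extPairs, hu.rightExt_eq_image_snd_extPairs,
    extPairs_eq_adjacentPairs hinf hu ha hb] at hneg
  omega

/-- If `u` satisfies property `R_3`, then `u` has no weak bispecial
factor. -/
theorem no_weakBispecial_of_propertyR_three [Fintype A] (u : ℕ → A)
    (h : PropertyR u 3) : ∀ w, ¬ WeakBispecial u w :=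
  no_weakBispecial_of_propertyR_three_general u h
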